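/- Let f, g : ℝ → ℝ be continuous non-negative functions and μ > 0. If for every t one has D⁺(f²)(t) ≤ −2μ f(t)² + 2 f(t) g(t), then for every t one has D⁺f(t) ≤ −μ f(t) + g(t). -/

import Mathlib

/-!
Where `f t > 0`, dividing `f(z)² − f(t)² = (f z + f t)(f z − f t)` by `f z + f t → 2 f t` turns the
bound on `D⁺(f²)` into the bound on `D⁺f`. At a zero of `f` this division is impossible; instead,
`u = √(f² + ε²)` is positive with `D⁺(u²) = D⁺(f²) ≤ 2 f g ≤ 2 u g`, so `D⁺u ≤ g` everywhere. The
fencing theorem then gives `u z ≤ u t + b (z − t)` near `t` for any `b > g t`, and letting `ε → 0`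
gives the same bound for `f`, whence `D⁺f(t) ≤ g(t)`.
-/

open Filter

/-- Upper right Dini derivative: `D⁺f(t) = limsup_{h→0⁺} (f(t+h) − f(t))/h`. -/
noncomputable def diniUpperRight (f : ℝ → ℝ) (t : ℝ) : EReal :=
  limsup (fun h : ℝ => (((f (t + h) - f t) / h : ℝ) : EReal)) (nhdsWithin 0 (Set.Ioi 0))

open Topology Set

theorem diniUpperRight_eq_limsup_slope (f : ℝ → ℝ) (t : ℝ) :
    diniUpperRight f t = limsup (fun z => (slope f t z : EReal)) (𝓝[>] t) := by
  have hmap : map (t + ·) (𝓝[>] (0 : ℝ)) = 𝓝[>] t := by simp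
  rw [diniUpperRight, ← hmap, ← limsup_comp]
  congr 1
  funext h
  simp [slope_def_field]

theorem eventually_slope_lt_of_diniUpperRight_lt {f : ℝ → ℝ} {t r : ℝ}
    (h : diniUpperRight f t < r) : ∀ᶠ z in 𝓝[>] t, slope f t z < r := by
  rw [diniUpperRight_eq_limsup_slope] at h
  filter_upwards [eventually_lt_of_limsup_lt h] with z hz
  exact_mod_cast hz

theorem diniUpperRight_le_of_eventually_slope_le {f : ℝ → ℝ} {t M : ℝ}
    (h : ∀ b, M < b → ∀ᶠ z in 𝓝[>] t, slope f t z ≤ b) : diniUpperRight f t ≤ M := by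
  refine EReal.le_of_forall_lt_iff_le.1 fun b hb => ?_
  rw [diniUpperRight_eq_limsup_slope]
  refine limsup_le_of_le (by isBoundedDefault) ?_
  filter_upwards [h b (by exact_mod_cast hb)] with z hz
  exact_mod_cast hz

theorem diniUpperRight_add_const (f : ℝ → ℝ) (c t : ℝ) :
    diniUpperRight (fun s => f s + c) t = diniUpperRight f t := by
  simp only [diniUpperRight, add_sub_add_right_eq_sub]

theorem diniUpperRight_le_of_sq_le {f : ℝ → ℝ} {t M : ℝ} (hf : ContinuousAt f t) (hft : 0 < f t)
    (h : diniUpperRight (fun s => f s ^ 2) t ≤ (2 * f t * M : ℝ)) : diniUpperRight f t ≤ M := by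
  refine diniUpperRight_le_of_eventually_slope_le fun b hb => ?_
  obtain ⟨r, hMr, hrb⟩ := exists_between (mul_lt_mul_of_pos_left hb (by positivity : 0 < 2 * f t))
  have hsq := eventually_slope_lt_of_diniUpperRight_lt (h.trans_lt (by exact_mod_cast hMr))
  have hsum : ∀ᶠ z in 𝓝[>] t, r < (f z + f t) * b := by
    have hlim : Tendsto (fun z => (f z + f t) * b) (𝓝 t) (𝓝 ((f t + f t) * b)) :=
      ((hf.add continuousAt_const).mul continuousAt_const).tendsto
    exact (hlim.eventually (eventually_gt_nhds (by linarith))).filter_mono nhdsWithin_le_nhds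
  have hpos : ∀ᶠ z in 𝓝[>] t, 0 < f z :=
    (hf.eventually (eventually_gt_nhds hft)).filter_mono nhdsWithin_le_nhds
  filter_upwards [hsq, hsum, hpos] with z hz hzb hz0
  have hfactor : slope (fun s => f s ^ 2) t z = (f z + f t) * slope f t z := by
    simp only [slope_def_field]
    ring
  rw [hfactor] at hz
  exact (lt_of_mul_lt_mul_left (hz.trans hzb) (by positivity)).le

theorem le_add_mul_sub_of_diniUpperRight_le {f : ℝ → ℝ} {a c b : ℝ}
    (hf : ContinuousOn f (Icc a c)) (hD : ∀ x ∈ Ico a c, diniUpperRight f x ≤ b)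
    {x : ℝ} (hx : x ∈ Icc a c) : f x ≤ f a + b * (x - a) :=
  image_le_of_liminf_slope_right_le_deriv_boundary (B := fun y => f a + b * (y - a)) hf (by simp)
    (by fun_prop)
    (fun y _ => by
      simpa using (((hasDerivWithinAt_id y (Ici y)).sub_const a).const_mul b).const_add (f a))
    (fun y hy r hr => (eventually_slope_lt_of_diniUpperRight_lt
      ((hD y hy).trans_lt (by exact_mod_cast hr))).frequently) hx

theorem diniUpperRight_sqrt_sq_add_sq_le {f g : ℝ → ℝ} {t ε : ℝ} (hf : ContinuousAt f t)
    (hgt : 0 ≤ g t) (hε : ε ≠ 0)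
    (h : diniUpperRight (fun s => f s ^ 2) t ≤ (2 * f t * g t : ℝ)) :
    diniUpperRight (fun s => √(f s ^ 2 + ε ^ 2)) t ≤ g t := by
  have hu_sq : (fun s => √(f s ^ 2 + ε ^ 2) ^ 2) = fun s => f s ^ 2 + ε ^ 2 :=
    funext fun s => Real.sq_sqrt (by positivity)
  have hfu : f t ≤ √(f t ^ 2 + ε ^ 2) :=
    Real.le_sqrt_of_sq_le (le_add_of_nonneg_right (sq_nonneg ε))
  refine diniUpperRight_le_of_sq_le (by fun_prop) (Real.sqrt_pos.2 (by positivity)) ?_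
  rw [hu_sq, diniUpperRight_add_const]
  exact h.trans (EReal.coe_le_coe_iff.2 (by gcongr))

theorem le_add_mul_sub_of_forall_sq_le {f g : ℝ → ℝ} (hf : Continuous f) (hg0 : ∀ t, 0 ≤ g t)
    (h : ∀ t, diniUpperRight (fun s => f s ^ 2) t ≤ (2 * f t * g t : ℝ))
    {a c b : ℝ} (hfa : 0 ≤ f a) (hgb : ∀ x ∈ Ico a c, g x ≤ b) {x : ℝ} (hx : x ∈ Icc a c) :
    f x ≤ f a + b * (x - a) := by
  refine le_of_forall_pos_le_add fun ε hε => ?_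
  have hu := le_add_mul_sub_of_diniUpperRight_le (f := fun s => √(f s ^ 2 + ε ^ 2))
    (by fun_prop) (fun y hy => (diniUpperRight_sqrt_sq_add_sq_le hf.continuousAt (hg0 y)
      hε.ne' (h y)).trans (EReal.coe_le_coe_iff.2 (hgb y hy))) hx
  have hfx : f x ≤ √(f x ^ 2 + ε ^ 2) :=
    Real.le_sqrt_of_sq_le (le_add_of_nonneg_right (sq_nonneg ε))
  have hfa' : √(f a ^ 2 + ε ^ 2) ≤ f a + ε :=
    Real.sqrt_le_iff.2 ⟨by positivity, by nlinarith⟩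
  linarith

theorem diniUpperRight_le_of_forall_sq_le {f g : ℝ → ℝ} (hf : Continuous f) (hg : Continuous g)
    (hf0 : ∀ t, 0 ≤ f t) (hg0 : ∀ t, 0 ≤ g t)
    (h : ∀ t, diniUpperRight (fun s => f s ^ 2) t ≤ (2 * f t * g t : ℝ)) (t : ℝ) :
    diniUpperRight f t ≤ g t := by
  refine diniUpperRight_le_of_eventually_slope_le fun b hb => ?_
  have hgb : ∀ᶠ x in 𝓝[≥] t, g x ≤ b :=
    ((hg.continuousAt.eventually (eventually_lt_nhds hb)).filter_mono nhdsWithin_le_nhds).mono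
      fun _ hx => hx.le
  obtain ⟨c, hc, hIco⟩ := mem_nhdsGE_iff_exists_Ico_subset.1 hgb
  filter_upwards [Ioo_mem_nhdsGT hc] with z hz
  have hgrowth := le_add_mul_sub_of_forall_sq_le hf hg0 h (hf0 t) (fun x hx => hIco hx)
    (Ioo_subset_Icc_self hz)
  rw [slope_def_field, div_le_iff₀ (sub_pos.2 hz.1)]
  linarith

theorem dini_of_dini_sq_bound
    (f g : ℝ → ℝ) (μ : ℝ) (hμ : 0 < μ)
    (hf : Continuous f) (hg : Continuous g)
    (hf0 : ∀ t : ℝ, 0 ≤ f t) (hg0 : ∀ t : ℝ, 0 ≤ g t)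
    (h : ∀ t : ℝ, diniUpperRight (fun s => f s ^ 2) t ≤
      ((-2 * μ * f t ^ 2 + 2 * f t * g t : ℝ) : EReal)) :
    ∀ t : ℝ, diniUpperRight f t ≤ ((-μ * f t + g t : ℝ) : EReal) := by
  intro t
  rcases (hf0 t).eq_or_lt with hft | hft
  · have hsq : ∀ s, diniUpperRight (fun s => f s ^ 2) s ≤ (2 * f s * g s : ℝ) := fun s =>
      (h s).trans (EReal.coe_le_coe_iff.2 (by nlinarith [hf0 s]))
    simpa [← hft] using diniUpperRight_le_of_forall_sq_le hf hg hf0 hg0 hsq t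
  · exact diniUpperRight_le_of_sq_le hf.continuousAt hft ((h t).trans_eq (by ring_nf))
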